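/- arXiv:1704.06810 — 6 statements merged into one kernel-verified Lean document; each statement's English description precedes it below -/
import Mathlib

section
/- Let A be an associative algebra over a field F, and let u_1, ..., u_m be elements of A such that for all i, j there exist nonzero scalars r_{i,j} ∈ F with u_i u_j = r_{i,j} u_j u_i, and r_{i,j} = 1 whenever u_i = u_j. Define the iterated commutator [u_1, ..., u_m]⁻ := [u_1, [u_2, ..., [u_{m-1}, u_m]⁻ ...]⁻]⁻ where [a,b]⁻ = ab - ba. Then [u_1, ..., u_m]⁻ = (r_{1,(2...m)} - 1)(r_{2,(3...m)} - 1) ⋯ (r_{m-1,m} - 1) · u_m u_{m-1} ⋯ u_1, where r_{i,(j...m)} := r_{i,j} r_{i,j+1} ⋯ r_{i,m}. -/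
/-!
Put `c = r_{1,(2…m)}`, `X = [u_2, …, u_m]⁻` and `P = u_m ⋯ u_2`. Quasi-commutation passes from
single factors to products and differences of products, so `u_1 X = c • X u_1`, whence
`[u_1, …, u_m]⁻ = u_1 X - X u_1 = (c - 1) • X u_1`. By induction `X` is a scalar multiple of `P`,
and `P u_1 = u_m ⋯ u_1`.
-/

/-- Iterated left-normed commutator `[u₁,[u₂,...,[u_{m-1},u_m]⁻...]⁻]⁻` with `[a,b]⁻ = ab - ba`. -/
def iterBracketSub {A : Type*} [Ring A] : List A → A
  | [] => 0
  | [a] => a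
  | a :: b :: l => a * iterBracketSub (b :: l) - iterBracketSub (b :: l) * a

open Finset

theorem iterBracketSub_cons {A : Type*} [Ring A] (a : A) {l : List A} (hl : l ≠ []) :
    iterBracketSub (a :: l) = a * iterBracketSub l - iterBracketSub l * a := by
  obtain ⟨b, l, rfl⟩ := List.exists_cons_of_ne_nil hl
  rfl

section QuasiCommute

variable {R A : Type*} [CommRing R] [Ring A] [Algebra R A]

theorem mul_mul_eq_smul_of_mul_eq_smul {a x y : A} {s t : R}
    (hx : a * x = s • (x * a)) (hy : a * y = t • (y * a)) :
    a * (x * y) = (s * t) • (x * y * a) := by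
  rw [← mul_assoc, hx, smul_mul_assoc, mul_assoc, hy, mul_smul_comm, smul_smul, ← mul_assoc]

theorem mul_commutator_eq_smul_of_mul_eq_smul {a x y : A} {s t : R}
    (hx : a * x = s • (x * a)) (hy : a * y = t • (y * a)) :
    a * (x * y - y * x) = (s * t) • ((x * y - y * x) * a) := by
  rw [mul_sub, sub_mul, smul_sub, mul_mul_eq_smul_of_mul_eq_smul hx hy,
    mul_mul_eq_smul_of_mul_eq_smul hy hx, mul_comm t]

theorem mul_iterBracketSub_ofFn_eq_smul (a : A) :
    ∀ {n : ℕ} (v : Fin n → A) (c : Fin n → R), (∀ k, a * v k = c k • (v k * a)) →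
      a * iterBracketSub (List.ofFn v) = (∏ k, c k) • (iterBracketSub (List.ofFn v) * a)
  | 0, _, _, _ => by simp [iterBracketSub]
  | 1, v, c, h => by simpa [iterBracketSub] using h 0
  | _ + 2, v, c, h => by
    rw [List.ofFn_succ, iterBracketSub_cons _ (by simp), Fin.prod_univ_succ]
    exact mul_commutator_eq_smul_of_mul_eq_smul (h 0)
      (mul_iterBracketSub_ofFn_eq_smul a _ _ fun k => h k.succ)

theorem iterBracketSub_ofFn_eq_smul_prod_reverse {n : ℕ} (u : Fin (n + 1) → A)
    (r : Fin (n + 1) → Fin (n + 1) → R) (hq : ∀ i j, i < j → u i * u j = r i j • (u j * u i)) :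
    iterBracketSub (List.ofFn u) =
      (∏ i : Fin n, ((∏ j > i.castSucc, r i.castSucc j) - 1)) • (List.ofFn u).reverse.prod := by
  induction n with
  | zero => simp [iterBracketSub]
  | succ n ih =>
    have hu0 := mul_iterBracketSub_ofFn_eq_smul (u 0) (fun k => u k.succ) (fun k => r 0 k.succ)
      fun k => hq 0 k.succ k.succ_pos
    have htail := ih (fun i => u i.succ) (fun i j => r i.succ j.succ)
      fun i j hij => hq _ _ (Fin.succ_lt_succ_iff.2 hij)
    rw [List.ofFn_succ, iterBracketSub_cons _ (by simp), hu0, htail, List.reverse_cons,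
      List.prod_append, List.prod_singleton]
    conv_rhs => rw [Fin.prod_univ_succ, Fin.castSucc_zero, Fin.prod_Ioi_zero]
    simp only [← Fin.succ_castSucc, Fin.prod_Ioi_succ]
    rw [smul_mul_assoc, smul_smul, ← sub_smul, sub_mul, one_mul]

end QuasiCommute

theorem stmt0_general {F A : Type*} [Field F] [Ring A] [Algebra F A] (m : ℕ)
    (u : Fin (m + 1) → A) (r : Fin (m + 1) → Fin (m + 1) → F)
    (hq : ∀ i j, u i * u j = r i j • (u j * u i)) :
    iterBracketSub (List.ofFn u) =
      (∏ i ∈ Finset.univ.filter (fun i : Fin (m + 1) => (i : ℕ) < m),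
        ((∏ j ∈ Finset.univ.filter (fun j => i < j), r i j) - 1)) •
        (List.ofFn u).reverse.prod := by
  rw [iterBracketSub_ofFn_eq_smul_prod_reverse u r fun i j _ => hq i j, prod_filter,
    Fin.prod_univ_castSucc]
  simp [filter_lt_eq_Ioi]

theorem stmt0 {F A : Type*} [Field F] [Ring A] [Algebra F A] (m : ℕ)
    (u : Fin (m + 1) → A) (r : Fin (m + 1) → Fin (m + 1) → F)
    (hr : ∀ i j, r i j ≠ 0)
    (hq : ∀ i j, u i * u j = r i j • (u j * u i))
    (h1 : ∀ i j, u i = u j → r i j = 1) :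
    iterBracketSub (List.ofFn u) =
      (∏ i ∈ Finset.univ.filter (fun i : Fin (m + 1) => (i : ℕ) < m),
        ((∏ j ∈ Finset.univ.filter (fun j => i < j), r i j) - 1)) •
        (List.ofFn u).reverse.prod :=
  stmt0_general m u r hq
end

section
/- Let Γ be a finite graph and u = h_1 h_2 ⋯ h_m a word over its vertex set. Then there exist subwords u_1, u_2, ..., u_r of u, obtained from u by a permutation that only transposes letters which are non-adjacent in Γ, such that u is the concatenation u_1 u_2 ⋯ u_r and the supports μ(u_1), ..., μ(u_r) are exactly the connected components of the subgraph of Γ induced by μ(u). -/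
/-!
Induct on the word. Suppose `u` has already been reordered into blocks whose supports are the
components of `μ(u)`, and prepend a letter `a`. The blocks touching `a` (containing `a` or a
neighbour of `a`) merge with `a` into one connected block. Each remaining block is disjoint from
and non-adjacent to `a` and to every touching block, so its letters commute past the touching
blocks; moving all of those blocks next to `a` yields the decomposition of `a :: u`.
-/

/-- One step of reordering a word: swap two adjacent letters which are
non-adjacent vertices of the graph `G`. -/
def SwapStep {V : Type*} (G : SimpleGraph V) (l₁ l₂ : List V) : Prop :=
  ∃ (s t : List V) (a b : V), ¬ G.Adj a b ∧
    l₁ = s ++ a :: b :: t ∧ l₂ = s ++ b :: a :: t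

open Relation

section

variable {V : Type*} {G : SimpleGraph V}

namespace SwapStep

lemma append_left (s : List V) {u v : List V} (h : SwapStep G u v) :
    SwapStep G (s ++ u) (s ++ v) := by
  obtain ⟨s', t, a, b, hab, rfl, rfl⟩ := h
  exact ⟨s ++ s', t, a, b, hab, by simp, by simp⟩

lemma append_right (t : List V) {u v : List V} (h : SwapStep G u v) :
    SwapStep G (u ++ t) (v ++ t) := by
  obtain ⟨s, t', a, b, hab, rfl, rfl⟩ := h
  exact ⟨s, t' ++ t, a, b, hab, by simp, by simp⟩

lemma perm {u v : List V} (h : SwapStep G u v) : u.Perm v := by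
  obtain ⟨s, t, a, b, -, rfl, rfl⟩ := h
  exact (List.Perm.swap b a t).append_left s

lemma reflTransGen_append_left (s : List V) {u v : List V}
    (h : ReflTransGen (SwapStep G) u v) : ReflTransGen (SwapStep G) (s ++ u) (s ++ v) :=
  h.lift _ fun _ _ h => h.append_left s

lemma reflTransGen_append_right (t : List V) {u v : List V}
    (h : ReflTransGen (SwapStep G) u v) : ReflTransGen (SwapStep G) (u ++ t) (v ++ t) :=
  h.lift _ fun _ _ h => h.append_right t

lemma reflTransGen_perm {u v : List V} (h : ReflTransGen (SwapStep G) u v) : u.Perm v := by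
  induction h with
  | refl => exact .refl u
  | tail _ hstep ih => exact ih.trans hstep.perm

lemma reflTransGen_cons_comm {x : V} {w : List V} (h : ∀ y ∈ w, ¬ G.Adj x y) :
    ReflTransGen (SwapStep G) (x :: w) (w ++ [x]) := by
  induction w with
  | nil => exact .refl
  | cons b w ih =>
    refine .head ⟨[], w, x, b, h b (by simp), rfl, rfl⟩ ?_
    exact reflTransGen_append_left [b] (ih fun y hy => h y (by simp [hy]))

lemma reflTransGen_append_comm {v w : List V} (h : ∀ x ∈ v, ∀ y ∈ w, ¬ G.Adj x y) :
    ReflTransGen (SwapStep G) (v ++ w) (w ++ v) := by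
  induction v with
  | nil => simpa using ReflTransGen.refl
  | cons x v ih =>
    have hv : ReflTransGen (SwapStep G) (x :: (v ++ w)) (x :: (w ++ v)) :=
      reflTransGen_append_left [x] (ih fun y hy => h y (by simp [hy]))
    have hx : ReflTransGen (SwapStep G) ((x :: w) ++ v) ((w ++ [x]) ++ v) :=
      reflTransGen_append_right v (reflTransGen_cons_comm (h x (by simp)))
    simpa using hv.trans hx

lemma reflTransGen_flatten_filter (p : List V → Bool) {l : List (List V)}
    (hl : l.Pairwise fun v w => ∀ x ∈ v, ∀ y ∈ w, ¬ G.Adj x y) :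
    ReflTransGen (SwapStep G) l.flatten
      ((l.filter p).flatten ++ (l.filter (!p ·)).flatten) := by
  induction l with
  | nil => exact .refl
  | cons v l ih =>
    obtain ⟨hv, hl⟩ := List.pairwise_cons.1 hl
    have hrest := reflTransGen_append_left v (ih hl)
    by_cases hp : p v
    · simpa [List.filter_cons, hp] using hrest
    · have hcomm : ∀ x ∈ v, ∀ y ∈ (l.filter p).flatten, ¬ G.Adj x y := by
        intro x hx y hy
        obtain ⟨w, hw, hyw⟩ := List.mem_flatten.1 hy
        exact hv w (List.mem_of_mem_filter hw) x hx y hyw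
      have hmove := reflTransGen_append_right (l.filter (!p ·)).flatten
        (reflTransGen_append_comm hcomm)
      simpa [List.filter_cons, hp] using hrest.trans (by simpa using hmove)

end SwapStep

def Touches (G : SimpleGraph V) (a : V) (s : Set V) : Prop :=
  ∃ b ∈ s, a = b ∨ G.Adj a b

lemma connected_induce_insert_of_touches {a : V} {s : Set V} (hs : (G.induce s).Connected)
    (ha : Touches G a s) : (G.induce (insert a s)).Connected := by
  obtain ⟨b, hb, rfl | hab⟩ := ha
  · rwa [Set.insert_eq_of_mem hb]
  · have hpair := SimpleGraph.induce_pair_connected_of_adj hab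
    have hunion := SimpleGraph.induce_union_connected hpair.preconnected hs.preconnected
      ⟨b, by simp, hb⟩
    rwa [Set.insert_union, Set.singleton_union, Set.insert_eq_of_mem hb] at hunion

lemma connected_induce_insert_biUnion {ι : Type*} {a : V} {t : Set ι} {s : ι → Set V}
    (hs : ∀ i ∈ t, (G.induce (s i)).Connected ∧ Touches G a (s i)) :
    (G.induce (insert a (⋃ i ∈ t, s i))).Connected := by
  refine SimpleGraph.induce_connected_of_patches a (Set.mem_insert a _) fun {v} hv => ?_
  obtain rfl | hv := Set.mem_insert_iff.1 hv
  · exact ⟨{v}, by simp, rfl, rfl, .refl _⟩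
  · obtain ⟨i, hi, hvi⟩ := Set.mem_iUnion₂.1 hv
    have hconn := connected_induce_insert_of_touches (hs i hi).1 (hs i hi).2
    exact ⟨insert a (s i), Set.insert_subset_insert (Set.subset_biUnion_of_mem hi),
      Set.mem_insert a _, Set.mem_insert_of_mem a hvi, hconn.preconnected _ _⟩

lemma disjoint_and_forall_not_adj_iff {s t : Finset V} :
    (Disjoint s t ∧ ∀ x ∈ s, ∀ y ∈ t, ¬ G.Adj x y) ↔ ∀ x ∈ s, ¬ Touches G x t := by
  simp only [Touches, Finset.disjoint_left, Finset.mem_coe, not_exists, not_and, not_or]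
  exact ⟨fun h x hx y hy => ⟨fun hxy => h.1 hx (by rwa [hxy]), h.2 x hx y hy⟩,
    fun h => ⟨fun x hx hxt => (h x hx x hxt).1 rfl, fun x hx y hy => (h x hx y hy).2⟩⟩

section ComponentBlocks

variable [DecidableEq V]

lemma List.foldr_union_map_toFinset (l : List (List V)) :
    (l.map List.toFinset).foldr (· ∪ ·) ∅ = l.flatten.toFinset := by
  induction l with
  | nil => rfl
  | cons v l ih => simp [ih]

/-- The supports of the blocks are then exactly the connected components of the subgraph induced
by their union. -/
def IsComponentBlocks (G : SimpleGraph V) (l : List (List V)) : Prop :=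
  (∀ v ∈ l, v ≠ [] ∧ (G.induce (↑v.toFinset : Set V)).Connected) ∧
    l.Pairwise fun v w => Disjoint v.toFinset w.toFinset ∧
      ∀ a ∈ v.toFinset, ∀ b ∈ w.toFinset, ¬ G.Adj a b

lemma IsComponentBlocks.merge {l : List (List V)} (hl : IsComponentBlocks G l) (a : V)
    [DecidablePred fun v : List V => Touches G a ↑v.toFinset] :
    IsComponentBlocks G
      ((a :: (l.filter fun v => Touches G a ↑v.toFinset).flatten) ::
        l.filter fun v => ¬ Touches G a ↑v.toFinset) := by
  obtain ⟨hblocks, hpair⟩ := hl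
  have : Std.Symm fun v w : List V => Disjoint v.toFinset w.toFinset ∧
      ∀ a ∈ v.toFinset, ∀ b ∈ w.toFinset, ¬ G.Adj a b :=
    ⟨fun _ _ ⟨hd, hna⟩ => ⟨hd.symm, fun x hx y hy h => hna y hy x hx h.symm⟩⟩
  refine ⟨?_, List.pairwise_cons.2 ⟨?_, hpair.sublist List.filter_sublist⟩⟩
  · rintro v (_ | ⟨_, hv⟩)
    · refine ⟨List.cons_ne_nil _ _, ?_⟩
      have hsupp : (↑(a :: (l.filter fun v => Touches G a ↑v.toFinset).flatten).toFinset : Set V)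
          = insert a (⋃ v ∈ {v | v ∈ l ∧ Touches G a ↑v.toFinset}, ↑v.toFinset) := by
        ext x
        simp [List.mem_flatten]
      rw [hsupp]
      exact connected_induce_insert_biUnion fun v hv => ⟨(hblocks v hv.1).2, hv.2⟩
    · exact hblocks v (List.mem_of_mem_filter hv)
  · intro w hw
    have hwa : ¬ Touches G a ↑w.toFinset := by simpa using List.of_mem_filter hw
    rw [disjoint_and_forall_not_adj_iff]
    intro x hx
    simp only [List.toFinset_cons, Finset.mem_insert, List.mem_toFinset, List.mem_flatten,
      List.mem_filter, decide_eq_true_eq] at hx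
    obtain rfl | ⟨v, ⟨hv, hva⟩, hxv⟩ := hx
    · exact hwa
    · have hvw : v ≠ w := by rintro rfl; exact hwa hva
      have hsep := hpair.forall hv (List.mem_of_mem_filter hw) hvw
      exact disjoint_and_forall_not_adj_iff.1 hsep x (List.mem_toFinset.2 hxv)

variable (G) in
lemma exists_reflTransGen_isComponentBlocks (u : List V) :
    ∃ l, ReflTransGen (SwapStep G) u l.flatten ∧ IsComponentBlocks G l := by
  classical
  induction u with
  | nil => exact ⟨[], .refl, by simp [IsComponentBlocks]⟩
  | cons a u ih =>
    obtain ⟨l, hu, hl⟩ := ih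
    refine ⟨_, ?_, hl.merge a⟩
    have hnonadj : l.Pairwise fun v w => ∀ x ∈ v, ∀ y ∈ w, ¬ G.Adj x y :=
      hl.2.imp fun h x hx y hy => h.2 x (List.mem_toFinset.2 hx) y (List.mem_toFinset.2 hy)
    have hsort := SwapStep.reflTransGen_flatten_filter
      (fun v => decide (Touches G a ↑v.toFinset)) hnonadj
    simpa using SwapStep.reflTransGen_append_left [a] (hu.trans hsort)

end ComponentBlocks

end

theorem stmt4_general {V : Type*} [DecidableEq V] (G : SimpleGraph V)
    (u : List V) :
    ∃ l : List (List V),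
      Relation.ReflTransGen (SwapStep G) u l.flatten ∧
      (∀ v ∈ l, v ≠ [] ∧ (G.induce (↑v.toFinset : Set V)).Connected) ∧
      l.Pairwise (fun v w => Disjoint v.toFinset w.toFinset ∧
        ∀ a ∈ v.toFinset, ∀ b ∈ w.toFinset, ¬ G.Adj a b) ∧
      (l.map List.toFinset).foldr (· ∪ ·) ∅ = u.toFinset := by
  obtain ⟨l, hu, hblocks, hpair⟩ := exists_reflTransGen_isComponentBlocks G u
  refine ⟨l, hu, hblocks, hpair, ?_⟩
  rw [List.foldr_union_map_toFinset]
  exact List.toFinset_eq_of_perm _ _ (SwapStep.reflTransGen_perm hu).symm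

theorem stmt4 {V : Type*} [Fintype V] [DecidableEq V] (G : SimpleGraph V)
    (u : List V) :
    ∃ l : List (List V),
      Relation.ReflTransGen (SwapStep G) u l.flatten ∧
      (∀ v ∈ l, v ≠ [] ∧ (G.induce (↑v.toFinset : Set V)).Connected) ∧
      l.Pairwise (fun v w => Disjoint v.toFinset w.toFinset ∧
        ∀ a ∈ v.toFinset, ∀ b ∈ w.toFinset, ¬ G.Adj a b) ∧
      (l.map List.toFinset).foldr (· ∪ ·) ∅ = u.toFinset :=
  stmt4_general G u
end

section
/- Let A be an associative algebra over a field F and let u_1, u_2 ∈ A satisfy u_1 u_2 = r u_2 u_1 with r ∈ F^*, and u_i u_i = u_i u_i trivially. For integers α_1, α_2 ≥ 1, the iterated alternating commutator construction gives: applying ad⁻(u_2) and ad⁻(u_1) alternately to u_1 (where ad⁻(x)(y) = [x,y]⁻ = xy - yx) produces, for a sequence of multiplicities, scalar multiples of u_1^{α_1} u_2^{α_2}; specifically, if ord(r) ∤ α_1 or ord(r^{-1}) ∤ α_2, then u_1^{α_1} u_2^{α_2} lies in the Lie subalgebra of (A, [·,·]⁻) generated by u_1 and u_2, provided u_1^{α_1}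 u_2^{α_2} ≠ 0. -/
/-! Write `X(a, b) = u₁ ^ a * u₂ ^ b`. Moving one factor past a block of the other through
`u₁ * u₂ = r • (u₂ * u₁)` gives
`r ^ b • ⁅u₁, X(a, b)⁆ = (r ^ b - 1) • X(a + 1, b)` and `r ^ a • ⁅X(a, b), u₂⁆ = (r ^ a - 1) • X(a, b + 1)`,
so whenever the factor `r ^ k - 1` is nonzero, bracketing with a generator raises an exponent
inside the Lie span. Starting from `u₁ = X(1, 0)`, if `r ^ α₂ ≠ 1` raise `b` to `α₂` (with
`r ≠ 1`), then `a` to `α₁`; if `r ^ α₁ ≠ 1` raise `b` to `1`, then `a` to `α₁`, then `b` to `α₂`. -/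

attribute [local instance] LieRing.ofAssociativeRing

section QuantumPlane

variable {F A : Type*} [Field F] [Ring A] [Algebra F A] {u₁ u₂ : A} {r : F}

theorem pow_mul_eq_smul_mul_pow (hq : u₁ * u₂ = r • (u₂ * u₁)) (n : ℕ) :
    u₁ ^ n * u₂ = r ^ n • (u₂ * u₁ ^ n) := by
  induction n with
  | zero => simp
  | succ n ih =>
    calc u₁ ^ (n + 1) * u₂ = u₁ ^ n * (u₁ * u₂) := by rw [pow_succ, mul_assoc]
      _ = r • ((u₁ ^ n * u₂) * u₁) := by rw [hq, mul_smul_comm, mul_assoc]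
      _ = r ^ (n + 1) • (u₂ * u₁ ^ (n + 1)) := by
        rw [ih, smul_mul_assoc, smul_smul, mul_assoc, ← pow_succ, ← pow_succ']

theorem mul_pow_eq_smul_pow_mul (hq : u₁ * u₂ = r • (u₂ * u₁)) (n : ℕ) :
    u₁ * u₂ ^ n = r ^ n • (u₂ ^ n * u₁) := by
  induction n with
  | zero => simp
  | succ n ih =>
    calc u₁ * u₂ ^ (n + 1) = (u₁ * u₂) * u₂ ^ n := by rw [pow_succ', mul_assoc]
      _ = r • (u₂ * (u₁ * u₂ ^ n)) := by rw [hq, smul_mul_assoc, mul_assoc]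
      _ = r ^ (n + 1) • (u₂ ^ (n + 1) * u₁) := by
        rw [ih, mul_smul_comm, smul_smul, ← mul_assoc, ← pow_succ', ← pow_succ']

theorem smul_lie_left_pow_mul_pow (hq : u₁ * u₂ = r • (u₂ * u₁)) (a b : ℕ) :
    r ^ b • ⁅u₁, u₁ ^ a * u₂ ^ b⁆ = (r ^ b - 1) • (u₁ ^ (a + 1) * u₂ ^ b) := by
  have hmove : u₁ ^ (a + 1) * u₂ ^ b = r ^ b • (u₁ ^ a * u₂ ^ b * u₁) := by
    rw [pow_succ, mul_assoc, mul_pow_eq_smul_pow_mul hq, mul_smul_comm, ← mul_assoc]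
  rw [Ring.lie_def, ← mul_assoc, ← pow_succ', smul_sub, ← hmove, sub_smul, one_smul]

theorem smul_lie_right_pow_mul_pow (hq : u₁ * u₂ = r • (u₂ * u₁)) (a b : ℕ) :
    r ^ a • ⁅u₁ ^ a * u₂ ^ b, u₂⁆ = (r ^ a - 1) • (u₁ ^ a * u₂ ^ (b + 1)) := by
  have hmove : u₁ ^ a * u₂ ^ (b + 1) = r ^ a • (u₂ * (u₁ ^ a * u₂ ^ b)) := by
    rw [pow_succ', ← mul_assoc, pow_mul_eq_smul_mul_pow hq, smul_mul_assoc, mul_assoc]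
  rw [Ring.lie_def, mul_assoc, ← pow_succ, smul_sub, ← hmove, sub_smul, one_smul]

theorem LieSubalgebra.mem_of_smul_lie_eq_smul {S : LieSubalgebra F A} {x y z : A} {c d : F}
    (hx : x ∈ S) (hy : y ∈ S) (hd : d ≠ 0) (h : c • ⁅x, y⁆ = d • z) : z ∈ S := by
  have hz : d • z ∈ S := h ▸ S.smul_mem c (S.lie_mem hx hy)
  simpa [smul_smul, inv_mul_cancel₀ hd] using S.smul_mem d⁻¹ hz

variable {S : LieSubalgebra F A}

theorem pow_mul_pow_mem_of_le_left (hq : u₁ * u₂ = r • (u₂ * u₁)) (h₁ : u₁ ∈ S) {a a' b : ℕ}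
    (hb : r ^ b ≠ 1) (h : u₁ ^ a * u₂ ^ b ∈ S) (ha : a ≤ a') : u₁ ^ a' * u₂ ^ b ∈ S := by
  induction a', ha using Nat.le_induction with
  | base => exact h
  | succ n _ ih =>
    exact LieSubalgebra.mem_of_smul_lie_eq_smul h₁ ih (sub_ne_zero.mpr hb)
      (smul_lie_left_pow_mul_pow hq n b)

theorem pow_mul_pow_mem_of_le_right (hq : u₁ * u₂ = r • (u₂ * u₁)) (h₂ : u₂ ∈ S) {a b b' : ℕ}
    (ha : r ^ a ≠ 1) (h : u₁ ^ a * u₂ ^ b ∈ S) (hb : b ≤ b') : u₁ ^ a * u₂ ^ b' ∈ S := by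
  induction b', hb using Nat.le_induction with
  | base => exact h
  | succ n _ ih =>
    exact LieSubalgebra.mem_of_smul_lie_eq_smul ih h₂ (sub_ne_zero.mpr ha)
      (smul_lie_right_pow_mul_pow hq a n)

end QuantumPlane

theorem stmt6_general {F A : Type*} [Field F] [Ring A] [Algebra F A]
    (u₁ u₂ : A) (r : F)
    (hq : u₁ * u₂ = r • (u₂ * u₁)) (α₁ α₂ : ℕ) (h₁ : 1 ≤ α₁) (h₂ : 1 ≤ α₂)
    (hord : ¬ orderOf r ∣ α₁ ∨ ¬ orderOf r⁻¹ ∣ α₂) :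
    u₁ ^ α₁ * u₂ ^ α₂ ∈ LieSubalgebra.lieSpan F A {u₁, u₂} := by
  have hu₁ : u₁ ∈ LieSubalgebra.lieSpan F A {u₁, u₂} := LieSubalgebra.subset_lieSpan (by simp)
  have hu₂ : u₂ ∈ LieSubalgebra.lieSpan F A {u₁, u₂} := LieSubalgebra.subset_lieSpan (by simp)
  have hbase : u₁ ^ 1 * u₂ ^ 0 ∈ LieSubalgebra.lieSpan F A {u₁, u₂} := by simpa using hu₁
  have hr_ne_one : ∀ {n}, r ^ n ≠ 1 → r ^ 1 ≠ 1 := fun hn h => hn (by rw [pow_one] at h; simp [h])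
  rcases hord with hα | hα
  · replace hα : r ^ α₁ ≠ 1 := fun h => hα (orderOf_dvd_of_pow_eq_one h)
    have h11 := pow_mul_pow_mem_of_le_right hq hu₂ (hr_ne_one hα) hbase zero_le_one
    have hα₁1 := pow_mul_pow_mem_of_le_left hq hu₁ (hr_ne_one hα) h11 h₁
    exact pow_mul_pow_mem_of_le_right hq hu₂ hα hα₁1 h₂
  · replace hα : r ^ α₂ ≠ 1 := fun h => hα (orderOf_dvd_of_pow_eq_one (by rw [inv_pow, h, inv_one]))
    have h1α₂ := pow_mul_pow_mem_of_le_right hq hu₂ (hr_ne_one hα) hbase (Nat.zero_le α₂)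
    exact pow_mul_pow_mem_of_le_left hq hu₁ hα h1α₂ h₁

theorem stmt6 {F A : Type*} [Field F] [Ring A] [Algebra F A]
    (u₁ u₂ : A) (r : F) (hr : r ≠ 0)
    (hq : u₁ * u₂ = r • (u₂ * u₁)) (α₁ α₂ : ℕ) (h₁ : 1 ≤ α₁) (h₂ : 1 ≤ α₂)
    (hne : u₁ ^ α₁ * u₂ ^ α₂ ≠ 0)
    (hord : ¬ orderOf r ∣ α₁ ∨ ¬ orderOf r⁻¹ ∣ α₂) :
    u₁ ^ α₁ * u₂ ^ α₂ ∈ LieSubalgebra.lieSpan F A {u₁, u₂} :=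
  stmt6_general u₁ u₂ r hq α₁ α₂ h₁ h₂ hord
end

section
/- Let A be an associative algebra over a field F and u_1, ..., u_k ∈ A homogeneous elements with u_i u_j = r_{i,j} u_j u_i for nonzero scalars r_{i,j}, and r_{i,j} = 1 when u_i = u_j. Writing l_i for the operator ad⁻(u_i) : x ↦ u_i x - x u_i, for all m_2, ..., m_k ≥ 1 one has l_k^{m_k} l_{k-1}^{m_{k-1}} ⋯ l_2^{m_2}(u_1) = λ_2^{m_2} λ_3^{m_3} ⋯ λ_k^{m_k} · u_1 u_2^{m_2} ⋯ u_k^{m_k}, where λ_i := r_{i,1} r_{i,2}^{m_2} ⋯ r_{i,i-1}^{m_{i-1}} - 1 for 2 ≤ i ≤ k. -/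
/-- The commutator operator `ad⁻(a) : x ↦ a x - x a`. -/
def adC {A : Type*} [Ring A] (a x : A) : A := a * x - x * a

/-- `opChain u m j x = l_{j+1}^{m_{j+1}} ⋯ l_2^{m_2}(x)` where `l_i = ad⁻(u i)`. -/
def opChain {A : Type*} [Ring A] (u : ℕ → A) (m : ℕ → ℕ) : ℕ → A → A
  | 0, x => x
  | (j + 1), x => (adC (u (j + 2)))^[m (j + 2)] (opChain u m j x)

/-!
If `a x = c x a`, then `ad⁻(a)(x a^n) = (c - 1) x a^(n+1)`, so `ad⁻(a)^n x = (c - 1)^n x a^n`.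
Each `u_i` quasi-commutes with the monomial `u_1 u_2^{m_2} ⋯ u_{i-1}^{m_{i-1}}` with factor
`r_{i,1} r_{i,2}^{m_2} ⋯ r_{i,i-1}^{m_{i-1}} = λ_i + 1`, so applying `l_i^{m_i}` to a scalar
multiple of that monomial multiplies the scalar by `λ_i^{m_i}` and appends `u_i^{m_i}`.
-/

def QuasiCommute {R A : Type*} [CommSemiring R] [Semiring A] [Algebra R A]
    (c : R) (a x : A) : Prop :=
  a * x = c • (x * a)

namespace QuasiCommute

variable {R A : Type*} [CommSemiring R] [Semiring A] [Algebra R A] {a x y : A} {c d : R}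

theorem mul_right (hx : QuasiCommute c a x) (hy : QuasiCommute d a y) :
    QuasiCommute (c * d) a (x * y) := calc
  a * (x * y) = c • (x * (a * y)) := by rw [← mul_assoc, hx, smul_mul_assoc, mul_assoc]
  _ = (c * d) • (x * y * a) := by rw [hy, mul_smul_comm, smul_smul, mul_assoc]

theorem pow_right (hx : QuasiCommute c a x) (n : ℕ) : QuasiCommute (c ^ n) a (x ^ n) := by
  induction n with
  | zero => simp [QuasiCommute]
  | succ n ih => rw [pow_succ, pow_succ]; exact ih.mul_right hx

end QuasiCommute

section adC

variable {R A : Type*} [CommRing R] [Ring A] [Algebra R A]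

theorem adC_smul (a : A) (s : R) (x : A) : adC a (s • x) = s • adC a x := by
  rw [adC, adC, mul_smul_comm, smul_mul_assoc, smul_sub]

theorem iterate_adC_smul (a : A) (s : R) (x : A) (n : ℕ) :
    (adC a)^[n] (s • x) = s • (adC a)^[n] x :=
  Function.Commute.iterate_left (fun x => adC_smul a s x) n x

theorem QuasiCommute.adC_mul_pow {a x : A} {c : R} (hx : QuasiCommute c a x) (n : ℕ) :
    adC a (x * a ^ n) = (c - 1) • (x * a ^ (n + 1)) := by
  rw [adC, ← mul_assoc, hx, smul_mul_assoc, mul_assoc, ← pow_succ', sub_smul, one_smul,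
    mul_assoc, ← pow_succ]

theorem QuasiCommute.iterate_adC {a x : A} {c : R} (hx : QuasiCommute c a x) (n : ℕ) :
    (adC a)^[n] x = (c - 1) ^ n • (x * a ^ n) := by
  induction n with
  | zero => simp
  | succ n ih =>
    rw [Function.iterate_succ_apply', ih, adC_smul, hx.adC_mul_pow, smul_smul, ← pow_succ]

end adC

section Chain

variable {R A : Type*} [CommRing R] [Ring A] [Algebra R A]
  (u : ℕ → A) (r : ℕ → ℕ → R) (m : ℕ → ℕ)

/-- The monomial `u_1 u_2^{m_2} ⋯ u_{n+1}^{m_{n+1}}`. -/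
def chainMonomial (n : ℕ) : A :=
  u 1 * ((List.range n).map (fun j => u (j + 2) ^ m (j + 2))).prod

theorem chainMonomial_succ (n : ℕ) :
    chainMonomial u m (n + 1) = chainMonomial u m n * u (n + 2) ^ m (n + 2) := by
  rw [chainMonomial, chainMonomial, List.range_succ, List.map_append, List.prod_append,
    List.map_singleton, List.prod_singleton, mul_assoc]

variable {u r}

theorem quasiCommute_chainMonomial (hqc : ∀ i j, QuasiCommute (r i j) (u i) (u j))
    (i n : ℕ) :
    QuasiCommute (r i 1 * ∏ j ∈ Finset.Ico 2 (n + 2), r i j ^ m j) (u i)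
      (chainMonomial u m n) := by
  induction n with
  | zero => simpa [chainMonomial] using hqc i 1
  | succ n ih =>
    rw [chainMonomial_succ, Finset.prod_Ico_succ_top (by omega), ← mul_assoc]
    exact ih.mul_right ((hqc i (n + 2)).pow_right _)

theorem opChain_eq_smul_chainMonomial (hqc : ∀ i j, QuasiCommute (r i j) (u i) (u j))
    (n : ℕ) :
    opChain u m n (u 1) =
      (∏ i ∈ Finset.Icc 2 (n + 1),
          ((r i 1 * ∏ j ∈ Finset.Ico 2 i, r i j ^ m j) - 1) ^ m i) •
        chainMonomial u m n := by
  induction n with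
  | zero => simp [opChain, chainMonomial]
  | succ n ih =>
    rw [opChain, ih, iterate_adC_smul, (quasiCommute_chainMonomial m hqc (n + 2) n).iterate_adC,
      smul_smul, ← Finset.prod_Icc_succ_top (by omega), chainMonomial_succ]

end Chain

theorem stmt7_general {F A : Type*} [Field F] [Ring A] [Algebra F A] (k : ℕ)
    (u : ℕ → A) (r : ℕ → ℕ → F) (m : ℕ → ℕ)
    (hqc : ∀ i j, u i * u j = r i j • (u j * u i)) :
    opChain u m (k - 1) (u 1) =
      (∏ i ∈ Finset.Icc 2 k,
          ((r i 1 * ∏ j ∈ Finset.Ico 2 i, r i j ^ m j) - 1) ^ m i) •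
        (u 1 * ((List.range (k - 1)).map (fun j => u (j + 2) ^ m (j + 2))).prod) := by
  rcases k with _ | k
  · simp [opChain]
  · exact opChain_eq_smul_chainMonomial m hqc k

theorem stmt7 {F A : Type*} [Field F] [Ring A] [Algebra F A] (k : ℕ) (hk : 1 ≤ k)
    (u : ℕ → A) (r : ℕ → ℕ → F) (m : ℕ → ℕ)
    (hr : ∀ i j, r i j ≠ 0)
    (hqc : ∀ i j, u i * u j = r i j • (u j * u i))
    (h1 : ∀ i j, u i = u j → r i j = 1)
    (hm : ∀ i, 2 ≤ i → i ≤ k → 1 ≤ m i) :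
    opChain u m (k - 1) (u 1) =
      (∏ i ∈ Finset.Icc 2 k,
          ((r i 1 * ∏ j ∈ Finset.Ico 2 i, r i j ^ m j) - 1) ^ m i) •
        (u 1 * ((List.range (k - 1)).map (fun j => u (j + 2) ^ m (j + 2))).prod) :=
  stmt7_general k u r m hqc
end

section
/- Let A be the quantum linear space algebra over a field F of characteristic zero with two generators x_1, x_2: x_1 x_2 = q_{12} x_2 x_1, q_{12} q_{21} = 1, x_i^{N_i} = 0 where N_i is the order of q_{ii} (set N_i = ∞ if q_{ii} = 1), and with PBW basis {x_2^{α_2} x_1^{α_1} : 0 ≤ α_i < N_i}. Then the Lie subalgebra 𝔏⁻(V) of (A, [·,·]⁻) generated by x_1 and x_2 equals the span of {x_1, x_2} ∪ {x_2^{α_2} x_1^{α_1} : 1 ≤ α_2 < N_2, 1 ≤ α_1 < N_1, and (ord(q_{12}) ∤ α_2 or ord(q_{12}) ∤ α_1)}. -/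
/-!
Write `M(a, b) = x₂ ^ a * x₁ ^ b`. From `x₁ x₂ = q x₂ x₁` one gets
`⁅M(a, b), M(c, e)⁆ = (q ^ (b c) - q ^ (e a)) M(a + c, b + e)`, and the coefficient vanishes
when `a + c = 0`, when `b + e = 0`, or when `ord q` divides both `a + c` and `b + e`. So the
span of `x₁`, `x₂` and the admissible monomials is closed under the bracket, and contains the
Lie subalgebra they generate. Conversely `⁅x₁, M(a, b)⁆ = (q ^ a - 1) M(a, b + 1)` and
`⁅x₂, M(a, b)⁆ = (1 - q ^ b) M(a + 1, b)`: when `ord q ∤ a`, one climbs from `x₁ = M(0, 1)` up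
to `M(a, 1)` and then to `M(a, b)` with invertible coefficients, and symmetrically when
`ord q ∤ b`, starting from `x₂`.
-/

attribute [local instance 100] LieRing.ofAssociativeRing

open Submodule

theorem LieSubalgebra.coe_lieSpan_eq_span_of_forall_lie_mem {R L : Type*} [CommRing R]
    [LieRing L] [LieAlgebra R L] {s : Set L} (hs : ∀ᵉ (x ∈ s) (y ∈ s), ⁅x, y⁆ ∈ span R s) :
    lieSpan R L s = span R s := by
  suffices ∀ {x y}, x ∈ span R s → y ∈ span R s → ⁅x, y⁆ ∈ span R s by
    refine le_antisymm ?_ submodule_span_le_lieSpan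
    change _ ≤ ({ span R s with lie_mem' := this } : LieSubalgebra R L)
    exact lieSpan_le.2 subset_span
  intro x y hx hy
  induction hx, hy using span_induction₂ with
  | mem_mem x y hx hy => exact hs x hx y hy
  | zero_left y hy => simp
  | zero_right x hx => simp
  | add_left x y z _ _ _ hx hy => simpa using add_mem hx hy
  | add_right x y z _ _ _ hx hy => simpa using add_mem hx hy
  | smul_left r x y _ _ h => simpa using smul_mem _ r h
  | smul_right r x y _ _ h => simpa using smul_mem _ r h

theorem pow_mul_eq_pow_mul_of_orderOf_dvd {M : Type*} [Monoid M] (q : M) {a b c e : ℕ}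
    (hac : orderOf q ∣ a + c) (hbe : orderOf q ∣ b + e) : q ^ (b * c) = q ^ (e * a) := by
  rw [← pow_mod_orderOf, ← pow_mod_orderOf q (e * a)]
  congr 1
  refine Nat.modEq_iff_dvd.2 ?_
  have key : ((e * a : ℕ) : ℤ) - (b * c : ℕ) = a * (b + e : ℕ) - b * (a + c : ℕ) := by
    push_cast; ring
  rw [key]
  exact dvd_sub ((Int.natCast_dvd_natCast.2 hbe).mul_left _)
    ((Int.natCast_dvd_natCast.2 hac).mul_left _)

section QuantumPlane

variable {R A : Type*} [CommRing R] [Ring A] [Algebra R A] {x y : A} {q : R}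

def admissibleMonomials (x y : A) (d N1 N2 : ℕ) : Set A :=
  {z | ∃ a2 a1 : ℕ, 1 ≤ a2 ∧ (N2 = 0 ∨ a2 < N2) ∧ 1 ≤ a1 ∧ (N1 = 0 ∨ a1 < N1) ∧
    (¬ d ∣ a2 ∨ ¬ d ∣ a1) ∧ z = y ^ a2 * x ^ a1}

theorem exists_eq_pow_mul_pow_of_mem {d N1 N2 : ℕ} {z : A}
    (hz : z ∈ ({x, y} ∪ admissibleMonomials x y d N1 N2 : Set A)) :
    ∃ a b : ℕ, z = y ^ a * x ^ b := by
  rcases hz with (rfl | rfl) | ⟨a, b, -, -, -, -, -, rfl⟩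
  · exact ⟨0, 1, by simp⟩
  · exact ⟨1, 0, by simp⟩
  · exact ⟨a, b, rfl⟩

theorem pow_mul_pow_mem_span_admissibleMonomials {d N1 N2 a b : ℕ}
    (hx : N1 ≠ 0 → x ^ N1 = 0) (hy : N2 ≠ 0 → y ^ N2 = 0)
    (ha : 1 ≤ a) (hb : 1 ≤ b) (hab : ¬ d ∣ a ∨ ¬ d ∣ b) :
    y ^ a * x ^ b ∈ span R ({x, y} ∪ admissibleMonomials x y d N1 N2) := by
  by_cases hya : N2 ≠ 0 ∧ N2 ≤ a
  · rw [pow_eq_zero_of_le hya.2 (hy hya.1), zero_mul]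
    exact zero_mem _
  by_cases hxb : N1 ≠ 0 ∧ N1 ≤ b
  · rw [pow_eq_zero_of_le hxb.2 (hx hxb.1), mul_zero]
    exact zero_mem _
  exact subset_span (Or.inr ⟨a, b, ha, by omega, hb, by omega, hab, rfl⟩)

variable (hxy : x * y = q • (y * x))
include hxy

theorem mul_pow_eq_smul (c : ℕ) : x * y ^ c = q ^ c • (y ^ c * x) := by
  induction c with
  | zero => simp
  | succ n ih =>
    rw [pow_succ, ← mul_assoc, ih, smul_mul_assoc, mul_assoc, hxy, mul_smul_comm, smul_smul,
      ← pow_succ, ← mul_assoc]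

theorem pow_mul_pow_eq_smul (b c : ℕ) : x ^ b * y ^ c = q ^ (b * c) • (y ^ c * x ^ b) := by
  induction b with
  | zero => simp
  | succ n ih =>
    rw [pow_succ, mul_assoc, mul_pow_eq_smul hxy, mul_smul_comm, ← mul_assoc, ih,
      smul_mul_assoc, smul_smul, ← pow_add, mul_assoc, ← pow_succ, add_one_mul, add_comm]

theorem monomial_mul_monomial (a b c e : ℕ) :
    y ^ a * x ^ b * (y ^ c * x ^ e) = q ^ (b * c) • (y ^ (a + c) * x ^ (b + e)) := by
  calc y ^ a * x ^ b * (y ^ c * x ^ e) = y ^ a * (x ^ b * y ^ c) * x ^ e := by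
        simp only [mul_assoc]
    _ = q ^ (b * c) • (y ^ (a + c) * x ^ (b + e)) := by
        rw [pow_mul_pow_eq_smul hxy, mul_smul_comm, smul_mul_assoc, pow_add, pow_add]
        simp only [mul_assoc]

theorem lie_monomial_monomial (a b c e : ℕ) :
    ⁅y ^ a * x ^ b, y ^ c * x ^ e⁆ =
      (q ^ (b * c) - q ^ (e * a)) • (y ^ (a + c) * x ^ (b + e)) := by
  rw [Ring.lie_def, monomial_mul_monomial hxy, monomial_mul_monomial hxy, sub_smul,
    add_comm c, add_comm e]

theorem lie_monomial_monomial_mem_span {N1 N2 : ℕ}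
    (hx : N1 ≠ 0 → x ^ N1 = 0) (hy : N2 ≠ 0 → y ^ N2 = 0) (a b c e : ℕ) :
    ⁅y ^ a * x ^ b, y ^ c * x ^ e⁆ ∈
      span R ({x, y} ∪ admissibleMonomials x y (orderOf q) N1 N2) := by
  rw [lie_monomial_monomial hxy]
  by_cases hq : q ^ (b * c) = q ^ (e * a)
  · simp [hq]
  refine smul_mem _ _ (pow_mul_pow_mem_span_admissibleMonomials hx hy ?_ ?_ ?_)
  · contrapose! hq
    obtain ⟨rfl, rfl⟩ : a = 0 ∧ c = 0 := by omega
    simp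
  · contrapose! hq
    obtain ⟨rfl, rfl⟩ : b = 0 ∧ e = 0 := by omega
    simp
  · contrapose! hq
    exact pow_mul_eq_pow_mul_of_orderOf_dvd q hq.1 hq.2

theorem lieSpan_admissibleMonomials_eq_span {N1 N2 : ℕ}
    (hx : N1 ≠ 0 → x ^ N1 = 0) (hy : N2 ≠ 0 → y ^ N2 = 0) :
    (LieSubalgebra.lieSpan R A ({x, y} ∪ admissibleMonomials x y (orderOf q) N1 N2)).toSubmodule =
      span R ({x, y} ∪ admissibleMonomials x y (orderOf q) N1 N2) := by
  refine LieSubalgebra.coe_lieSpan_eq_span_of_forall_lie_mem fun u hu v hv => ?_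
  obtain ⟨a, b, rfl⟩ := exists_eq_pow_mul_pow_of_mem hu
  obtain ⟨c, e, rfl⟩ := exists_eq_pow_mul_pow_of_mem hv
  exact lie_monomial_monomial_mem_span hxy hx hy a b c e

end QuantumPlane

section Climbing

variable {F A : Type*} [Field F] [Ring A] [Algebra F A] {x y : A} {q : F}
  (hxy : x * y = q • (y * x)) {L : LieSubalgebra F A}
include hxy

theorem pow_mul_pow_succ_mem (hx : x ∈ L) {a b : ℕ} (ha : ¬ orderOf q ∣ a)
    (h : y ^ a * x ^ b ∈ L) : y ^ a * x ^ (b + 1) ∈ L := by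
  have hq : q ^ a - 1 ≠ 0 := sub_ne_zero.2 (mt orderOf_dvd_of_pow_eq_one ha)
  have key := L.smul_mem (q ^ a - 1)⁻¹ (L.lie_mem hx h)
  have hlie := lie_monomial_monomial hxy 0 1 a b
  simp only [pow_zero, pow_one, one_mul, mul_zero, zero_add, add_comm 1]
    at hlie
  rwa [hlie, smul_smul, inv_mul_cancel₀ hq, one_smul] at key

theorem pow_succ_mul_pow_mem (hy : y ∈ L) {a b : ℕ} (hb : ¬ orderOf q ∣ b)
    (h : y ^ a * x ^ b ∈ L) : y ^ (a + 1) * x ^ b ∈ L := by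
  have hq : 1 - q ^ b ≠ 0 := sub_ne_zero.2 fun h => hb (orderOf_dvd_of_pow_eq_one h.symm)
  have key := L.smul_mem (1 - q ^ b)⁻¹ (L.lie_mem hy h)
  have hlie := lie_monomial_monomial hxy 1 0 a b
  simp only [pow_zero, pow_one, mul_one, zero_mul, zero_add, add_comm 1]
    at hlie
  rwa [hlie, smul_smul, inv_mul_cancel₀ hq, one_smul] at key

theorem pow_mul_pow_mem (hx : x ∈ L) (hy : y ∈ L) {a b : ℕ} (ha : 1 ≤ a) (hb : 1 ≤ b)
    (hab : ¬ orderOf q ∣ a ∨ ¬ orderOf q ∣ b) : y ^ a * x ^ b ∈ L := by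
  rcases hab with hda | hdb
  · have hd1 : ¬ orderOf q ∣ 1 := fun h => hda (h.trans (one_dvd a))
    have hcol : ∀ k : ℕ, y ^ k * x ^ 1 ∈ L := fun k => by
      induction k with
      | zero => simpa using hx
      | succ k ih => exact pow_succ_mul_pow_mem hxy hy hd1 ih
    induction b, hb using Nat.le_induction with
    | base => exact hcol a
    | succ b _ ih => exact pow_mul_pow_succ_mem hxy hx hda ih
  · have hd1 : ¬ orderOf q ∣ 1 := fun h => hdb (h.trans (one_dvd b))
    have hrow : ∀ k : ℕ, y ^ 1 * x ^ k ∈ L := fun k => by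
      induction k with
      | zero => simpa using hy
      | succ k ih => exact pow_mul_pow_succ_mem hxy hx hd1 ih
    induction a, ha using Nat.le_induction with
    | base => exact hrow b
    | succ a _ ih => exact pow_succ_mul_pow_mem hxy hy hdb ih

theorem lieSpan_pair_eq_span_admissibleMonomials {N1 N2 : ℕ}
    (hx : N1 ≠ 0 → x ^ N1 = 0) (hy : N2 ≠ 0 → y ^ N2 = 0) :
    (LieSubalgebra.lieSpan F A {x, y}).toSubmodule =
      span F ({x, y} ∪ admissibleMonomials x y (orderOf q) N1 N2) := by
  set L := LieSubalgebra.lieSpan F A {x, y}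
  have hxL : x ∈ L := LieSubalgebra.subset_lieSpan (by simp)
  have hyL : y ∈ L := LieSubalgebra.subset_lieSpan (by simp)
  have hsub : {x, y} ∪ admissibleMonomials x y (orderOf q) N1 N2 ⊆ L := by
    rintro z ((rfl | rfl) | ⟨a, b, ha, -, hb, -, hab, rfl⟩)
    exacts [hxL, hyL, pow_mul_pow_mem hxy hxL hyL ha hb hab]
  refine le_antisymm ?_ (span_le.2 hsub)
  rw [← lieSpan_admissibleMonomials_eq_span hxy hx hy]
  exact LieSubalgebra.lieSpan_mono Set.subset_union_left

end Climbing

theorem stmt17_general {F A : Type*} [Field F] [Ring A] [Algebra F A]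
    (x1 x2 : A) (q11 q22 q12 : F) (N1 N2 : ℕ)  -- `N i = 0` encodes `N_i = ∞`
    (hcomm : x1 * x2 = q12 • (x2 * x1))
    (hN1 : (q11 = 1 → N1 = 0) ∧ (q11 ≠ 1 → N1 = orderOf q11 ∧ x1 ^ N1 = 0))
    (hN2 : (q22 = 1 → N2 = 0) ∧ (q22 ≠ 1 → N2 = orderOf q22 ∧ x2 ^ N2 = 0)) :
    (LieSubalgebra.lieSpan F A {x1, x2}).toSubmodule =
      Submodule.span F ({x1, x2} ∪
        {y : A | ∃ a2 a1 : ℕ, 1 ≤ a2 ∧ (N2 = 0 ∨ a2 < N2) ∧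
          1 ≤ a1 ∧ (N1 = 0 ∨ a1 < N1) ∧
          (¬ orderOf q12 ∣ a2 ∨ ¬ orderOf q12 ∣ a1) ∧
          y = x2 ^ a2 * x1 ^ a1}) :=
  lieSpan_pair_eq_span_admissibleMonomials hcomm (fun h => (hN1.2 (mt hN1.1 h)).2)
    (fun h => (hN2.2 (mt hN2.1 h)).2)

theorem stmt17 {F A : Type*} [Field F] [CharZero F] [Ring A] [Algebra F A]
    (x1 x2 : A) (q11 q22 q12 q21 : F) (N1 N2 : ℕ)  -- `N i = 0` encodes `N_i = ∞`
    (hq12 : q12 ≠ 0)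
    (hcomm : x1 * x2 = q12 • (x2 * x1)) (hinv : q12 * q21 = 1)
    (hN1 : (q11 = 1 → N1 = 0) ∧ (q11 ≠ 1 → N1 = orderOf q11 ∧ x1 ^ N1 = 0))
    (hN2 : (q22 = 1 → N2 = 0) ∧ (q22 ≠ 1 → N2 = orderOf q22 ∧ x2 ^ N2 = 0))
    (B : Module.Basis {p : ℕ × ℕ // (N1 = 0 ∨ p.1 < N1) ∧ (N2 = 0 ∨ p.2 < N2)} F A)
    (hB : ∀ p, B p = x2 ^ (p : ℕ × ℕ).2 * x1 ^ (p : ℕ × ℕ).1) :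
    (LieSubalgebra.lieSpan F A {x1, x2}).toSubmodule =
      Submodule.span F ({x1, x2} ∪
        {y : A | ∃ a2 a1 : ℕ, 1 ≤ a2 ∧ (N2 = 0 ∨ a2 < N2) ∧
          1 ≤ a1 ∧ (N1 = 0 ∨ a1 < N1) ∧
          (¬ orderOf q12 ∣ a2 ∨ ¬ orderOf q12 ∣ a1) ∧
          y = x2 ^ a2 * x1 ^ a1}) :=
  stmt17_general x1 x2 q11 q22 q12 N1 N2 hcomm hN1 hN2
end

section
/- Let F have characteristic zero, let q_{12} = -1, and let A be the rank-2 quantum linear space with ord(q_{11}) = 3, ord(q_{22}) = 5 (so x_1³ = 0, x_2⁵ = 0, x_1 x_2 = -x_2 x_1, and PBW basis x_2^{α_2} x_1^{α_1}, 0 ≤ α_1 < 3, 0 ≤ α_2 < 5). Then the Lie subalgebra of (A, [·,·]⁻) generated by x_1, x_2 has basis {x_1, x_2, x_2 x_1, x_2 x_1², x_2² x_1, x_2³ x_1, x_2³ x_1², x_2⁴ x_1}, and in particular has dimension 8. -/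
/-!
Write `m(i, j) = x₂ ^ i * x₁ ^ j`. Anticommutation gives
`⁅m(i, j), m(k, l)⁆ = ((-1) ^ (j k) - (-1) ^ (l i)) • m(i + k, j + l)`, and `m(i, j) = 0` once
`i ≥ 5` or `j ≥ 3`. So the bracket of two of the eight listed monomials is either zero or `±2`
times another one, which is a finite check: their span is a Lie subalgebra. Conversely, since
`2 ≠ 0` in `F`, each of them arises from `x₁, x₂` by iterated brackets with coefficient `±2`.
The eight monomials are part of the PBW basis, which gives the dimension.
-/

attribute [local instance 100] LieRing.ofAssociativeRing

open Submodule in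
theorem LieSubalgebra.toSubmodule_lieSpan_eq_span {R L : Type*} [CommRing R] [LieRing L]
    [LieAlgebra R L] {s G : Set L} (hsG : s ⊆ G) (hG : G ⊆ lieSpan R L s)
    (hlie : ∀ u ∈ G, ∀ v ∈ G, ⁅u, v⁆ ∈ span R G) :
    (lieSpan R L s).toSubmodule = span R G := by
  have hclosed {x y : L} (hx : x ∈ span R G) (hy : y ∈ span R G) : ⁅x, y⁆ ∈ span R G := by
    induction hx, hy using span_induction₂ with
    | mem_mem x y hx hy => exact hlie x hx y hy
    | zero_left y hy => simp
    | zero_right x hx => simp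
    | add_left x y z _ _ _ hx hy => simpa using add_mem hx hy
    | add_right x y z _ _ _ hx hy => simpa using add_mem hx hy
    | smul_left r x y _ _ h => simpa using smul_mem _ r h
    | smul_right r x y _ _ h => simpa using smul_mem _ r h
  refine le_antisymm ?_ (span_le.mpr hG)
  change _ ≤ ({ span R G with lie_mem' := hclosed } : LieSubalgebra R L)
  exact lieSpan_le.mpr (hsG.trans subset_span)

theorem LinearIndepOn.finrank_span_image {R M ι : Type*} [Ring R] [Nontrivial R]
    [StrongRankCondition R] [AddCommGroup M] [Module R M] {f : ι → M} {s : Finset ι}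
    (hf : LinearIndepOn R f s) :
    Module.finrank R (Submodule.span R (f '' s)) = s.card := by
  rw [Set.image_eq_range, finrank_span_eq_card hf]
  simp

section Anticommuting

variable {A : Type*} [Ring A] {x y : A}

theorem mul_pow_of_mul_eq_neg (hxy : x * y = -(y * x)) (n : ℕ) :
    x * y ^ n = (-1 : ℤ) ^ n • (y ^ n * x) := by
  induction n with
  | zero => simp
  | succ n ih =>
    rw [pow_succ, ← mul_assoc, ih, smul_mul_assoc, mul_assoc, hxy, pow_succ']
    simp [mul_assoc]

theorem pow_mul_pow_of_mul_eq_neg (hxy : x * y = -(y * x)) (k n : ℕ) :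
    x ^ k * y ^ n = (-1 : ℤ) ^ (k * n) • (y ^ n * x ^ k) := by
  induction k with
  | zero => simp
  | succ k ih =>
    rw [pow_succ, mul_assoc, mul_pow_of_mul_eq_neg hxy, mul_smul_comm, ← mul_assoc, ih,
      smul_mul_assoc, smul_smul, mul_assoc, ← pow_succ, ← pow_add, Nat.succ_mul, Nat.add_comm n]

def pbwMonomial (x y : A) (p : ℕ × ℕ) : A := y ^ p.1 * x ^ p.2

theorem pbwMonomial_mul (hxy : x * y = -(y * x)) (p q : ℕ × ℕ) :
    pbwMonomial x y p * pbwMonomial x y q = (-1 : ℤ) ^ (p.2 * q.1) • pbwMonomial x y (p + q) := by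
  simp only [pbwMonomial, Prod.fst_add, Prod.snd_add, pow_add]
  rw [mul_assoc, ← mul_assoc (x ^ p.2), pow_mul_pow_of_mul_eq_neg hxy, smul_mul_assoc,
    mul_smul_comm, mul_assoc, mul_assoc]

theorem lie_pbwMonomial (hxy : x * y = -(y * x)) (p q : ℕ × ℕ) :
    ⁅pbwMonomial x y p, pbwMonomial x y q⁆ =
      ((-1 : ℤ) ^ (p.2 * q.1) - (-1) ^ (q.2 * p.1)) • pbwMonomial x y (p + q) := by
  rw [Ring.lie_def, pbwMonomial_mul hxy, pbwMonomial_mul hxy, add_comm q, sub_smul]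

theorem pbwMonomial_eq_zero {m n : ℕ} (hx : x ^ m = 0) (hy : y ^ n = 0) {p : ℕ × ℕ}
    (hp : n ≤ p.1 ∨ m ≤ p.2) : pbwMonomial x y p = 0 := by
  rcases hp with hp | hp
  · simp [pbwMonomial, pow_eq_zero_of_le hp hy]
  · simp [pbwMonomial, pow_eq_zero_of_le hp hx]

theorem lie_mem_span_pbwMonomial {R : Type*} [CommRing R] [Module R A]
    (hxy : x * y = -(y * x)) {m n : ℕ} (hx : x ^ m = 0) (hy : y ^ n = 0) {P : Set (ℕ × ℕ)}
    (hP : ∀ p ∈ P, ∀ q ∈ P,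
      (-1 : ℤ) ^ (p.2 * q.1) = (-1) ^ (q.2 * p.1) ∨ n ≤ p.1 + q.1 ∨ m ≤ p.2 + q.2 ∨ p + q ∈ P) :
    ∀ u ∈ pbwMonomial x y '' P, ∀ v ∈ pbwMonomial x y '' P,
      ⁅u, v⁆ ∈ Submodule.span R (pbwMonomial x y '' P) := by
  rintro _ ⟨p, hp, rfl⟩ _ ⟨q, hq, rfl⟩
  rw [lie_pbwMonomial hxy]
  rcases hP p hp q hq with hsign | hvanish | hvanish | hpq
  · simp [hsign]
  · rw [pbwMonomial_eq_zero hx hy (p := p + q) (.inl hvanish), smul_zero]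
    exact zero_mem _
  · rw [pbwMonomial_eq_zero hx hy (p := p + q) (.inr hvanish), smul_zero]
    exact zero_mem _
  · exact zsmul_mem (Submodule.subset_span (Set.mem_image_of_mem _ hpq)) _

theorem pbwMonomial_add_mem {F : Type*} [Field F] [CharZero F] [Algebra F A]
    (hxy : x * y = -(y * x)) {K : LieSubalgebra F A} {p q : ℕ × ℕ}
    (hsign : (-1 : ℤ) ^ (p.2 * q.1) ≠ (-1) ^ (q.2 * p.1))
    (hp : pbwMonomial x y p ∈ K) (hq : pbwMonomial x y q ∈ K) : pbwMonomial x y (p + q) ∈ K := by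
  have hbracket := K.lie_mem hp hq
  rw [lie_pbwMonomial hxy, ← Int.cast_smul_eq_zsmul F] at hbracket
  have hc : (((-1 : ℤ) ^ (p.2 * q.1) - (-1) ^ (q.2 * p.1) : ℤ) : F) ≠ 0 := by
    exact_mod_cast sub_ne_zero.mpr hsign
  exact (Submodule.smul_mem_iff K.toSubmodule hc).mp hbracket

theorem linearIndepOn_pbwMonomial {R : Type*} [CommRing R] [Module R A] {a b : ℕ}
    (B : Module.Basis (Fin a × Fin b) R A) (hB : ∀ p, B p = pbwMonomial x y (p.1, p.2)) :
    LinearIndepOn R (pbwMonomial x y) (Set.Iio a ×ˢ Set.Iio b) := by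
  have hval : Function.Injective (Prod.map ((↑) : Fin a → ℕ) ((↑) : Fin b → ℕ)) :=
    Fin.val_injective.prodMap Fin.val_injective
  rw [← Fin.range_val, ← Fin.range_val, ← Set.range_prodMap, linearIndepOn_range_iff hval]
  convert B.linearIndependent
  exact funext fun p => (hB p).symm

end Anticommuting

theorem stmt18 {F A : Type*} [Field F] [CharZero F] [Ring A] [Algebra F A]
    (x1 x2 : A)
    (hcomm : x1 * x2 = -(x2 * x1)) (h3 : x1 ^ 3 = 0) (h5 : x2 ^ 5 = 0)
    (B : Module.Basis (Fin 5 × Fin 3) F A)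
    (hB : ∀ p : Fin 5 × Fin 3, B p = x2 ^ (p.1 : ℕ) * x1 ^ (p.2 : ℕ)) :
    (LieSubalgebra.lieSpan F A {x1, x2}).toSubmodule =
      Submodule.span F
        ({x1, x2, x2 * x1, x2 * x1 ^ 2, x2 ^ 2 * x1, x2 ^ 3 * x1,
          x2 ^ 3 * x1 ^ 2, x2 ^ 4 * x1} : Set A) ∧
    Module.finrank F ↥(LieSubalgebra.lieSpan F A {x1, x2}) = 8 := by
  set L := LieSubalgebra.lieSpan F A {x1, x2}
  let P : Finset (ℕ × ℕ) := {(0, 1), (1, 0), (1, 1), (1, 2), (2, 1), (3, 1), (3, 2), (4, 1)}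
  have hP : ({x1, x2, x2 * x1, x2 * x1 ^ 2, x2 ^ 2 * x1, x2 ^ 3 * x1, x2 ^ 3 * x1 ^ 2,
      x2 ^ 4 * x1} : Set A) = pbwMonomial x1 x2 '' P := by
    simp [P, pbwMonomial, Set.image_insert_eq]
  have h01 : pbwMonomial x1 x2 (0, 1) ∈ L := by
    simpa [pbwMonomial] using (LieSubalgebra.subset_lieSpan (R := F) (by simp) : x1 ∈ L)
  have h10 : pbwMonomial x1 x2 (1, 0) ∈ L := by
    simpa [pbwMonomial] using (LieSubalgebra.subset_lieSpan (R := F) (by simp) : x2 ∈ L)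
  have h11 : pbwMonomial x1 x2 (1, 1) ∈ L := pbwMonomial_add_mem hcomm (by decide) h01 h10
  have h12 : pbwMonomial x1 x2 (1, 2) ∈ L := pbwMonomial_add_mem hcomm (by decide) h11 h01
  have h21 : pbwMonomial x1 x2 (2, 1) ∈ L := pbwMonomial_add_mem hcomm (by decide) h11 h10
  have h31 : pbwMonomial x1 x2 (3, 1) ∈ L := pbwMonomial_add_mem hcomm (by decide) h21 h10
  have h32 : pbwMonomial x1 x2 (3, 2) ∈ L := pbwMonomial_add_mem hcomm (by decide) h31 h01
  have h41 : pbwMonomial x1 x2 (4, 1) ∈ L := pbwMonomial_add_mem hcomm (by decide) h31 h10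
  have hspan : L.toSubmodule = Submodule.span F (pbwMonomial x1 x2 '' P) := by
    refine LieSubalgebra.toSubmodule_lieSpan_eq_span
      (by rw [← hP]; simp [Set.insert_subset_iff]) ?_
      (lie_mem_span_pbwMonomial hcomm h3 h5 (by decide))
    simp only [P, Finset.coe_insert, Finset.coe_singleton, Set.image_insert_eq,
      Set.image_singleton, Set.insert_subset_iff, Set.singleton_subset_iff]
    exact ⟨h01, h10, h11, h12, h21, h31, h32, h41⟩
  refine ⟨hP ▸ hspan, ?_⟩
  have hindep : LinearIndepOn F (pbwMonomial x1 x2) (P : Set (ℕ × ℕ)) :=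
    (linearIndepOn_pbwMonomial B hB).mono (by simp [P, Set.insert_subset_iff])
  show Module.finrank F L.toSubmodule = 8
  rw [hspan, hindep.finrank_span_image]
  rfl
end
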